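/- Let A, B be v×v Hermitian matrices with −B ≤ A ≤ B (i.e., B − A and B + A are positive semidefinite). Then for every j = 1, ..., v, the j-th largest singular value of A satisfies t_j(A) ≤ t_j(B ⊕ B), where B ⊕ B is the 2v×2v block-diagonal direct sum. -/

import Mathlib

open ComplexOrder

/-- The singular values of a complex square matrix, arranged in decreasing order:
the eigenvalues of `(Aᴴ * A) ^ (1/2)`, i.e. the square roots of the eigenvalues of
`Aᴴ * A`, sorted decreasingly. -/
noncomputable def sval {n : ℕ} (A : Matrix (Fin n) (Fin n) ℂ) : Fin n → ℝ :=
  fun j =>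
    let e : Fin n → ℝ := fun i =>
      Real.sqrt ((Matrix.posSemidef_conjTranspose_mul_self A).isHermitian.eigenvalues i)
    e (Tuple.sort (fun i => -(e i)) j)

/-- The block-diagonal direct sum of two square matrices, indexed by `Fin (n + n)`. -/
noncomputable def dirSum {n : ℕ} (A B : Matrix (Fin n) (Fin n) ℂ) :
    Matrix (Fin (n + n)) (Fin (n + n)) ℂ :=
  Matrix.reindex finSumFinEquiv finSumFinEquiv (Matrix.fromBlocks A 0 0 B)

/-!
For `t ≥ 0`, `t < t_j(M)` holds iff more than `j` singular values of `M` exceed `t`, so it suffices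
to compare these counts. The singular values of a Hermitian matrix are the `|λ_i|`, hence
`#{t < |λ_i(A)|} ≤ #{t < λ_i(A)} + #{t < -λ_i(A)} ≤ 2 #{t < λ_i(B)} ≤ #{t < t_i(B ⊕ B)}`, where the
middle step is Weyl's monotonicity principle applied to `A ≤ B` and `-A ≤ B`: the eigenvalue
counts are compared through the dimension argument behind the Courant–Fischer theorem.
-/

open Finset Submodule WithLp Matrix
open scoped InnerProductSpace ComplexConjugate

section WeylCounting

variable {𝕜 E : Type*} [RCLike 𝕜] [NormedAddCommGroup E] [InnerProductSpace 𝕜 E]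
  {ι κ : Type*} [Fintype ι] [Fintype κ]

theorem Orthonormal.re_inner_sum_smul {f : ι → E} (hf : Orthonormal 𝕜 f) (μ : ι → ℝ)
    (c : ι → 𝕜) :
    RCLike.re ⟪∑ i, (c i * μ i) • f i, ∑ i, c i • f i⟫_𝕜 = ∑ i, μ i * ‖c i‖ ^ 2 := by
  rw [hf.inner_sum, map_sum]
  refine Finset.sum_congr rfl fun i _ => ?_
  have : conj (c i * μ i) * c i = ((μ i * ‖c i‖ ^ 2 : ℝ) : 𝕜) := by
    rw [map_mul, RCLike.conj_ofReal, mul_right_comm, RCLike.conj_mul]; push_cast; ring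
  rw [this, RCLike.ofReal_re]

theorem Orthonormal.exists_re_inner_eq_sum {f : ι → E} (hf : Orthonormal 𝕜 f)
    {T : E →ₗ[𝕜] E} {μ : ι → ℝ} (hT : ∀ i, T (f i) = (μ i : 𝕜) • f i)
    {x : E} (hx : x ∈ span 𝕜 (Set.range f)) :
    ∃ c : ι → 𝕜, ‖x‖ ^ 2 = ∑ i, ‖c i‖ ^ 2 ∧ RCLike.re ⟪T x, x⟫_𝕜 = ∑ i, μ i * ‖c i‖ ^ 2 := by
  obtain ⟨c, rfl⟩ := (mem_span_range_iff_exists_fun 𝕜).mp hx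
  refine ⟨c, ?_, ?_⟩
  · simpa using hf.re_inner_sum_smul 1 c
  · simp_rw [map_sum, map_smul, hT, smul_smul]
    exact hf.re_inner_sum_smul μ c

theorem Orthonormal.re_inner_le_of_mem_span {f : ι → E} (hf : Orthonormal 𝕜 f)
    {T : E →ₗ[𝕜] E} {μ : ι → ℝ} (hT : ∀ i, T (f i) = (μ i : 𝕜) • f i) {t : ℝ}
    (hμ : ∀ i, μ i ≤ t) {x : E} (hx : x ∈ span 𝕜 (Set.range f)) :
    RCLike.re ⟪T x, x⟫_𝕜 ≤ t * ‖x‖ ^ 2 := by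
  obtain ⟨c, hnorm, hre⟩ := hf.exists_re_inner_eq_sum hT hx
  rw [hre, hnorm, mul_sum]
  gcongr with i
  exact hμ i

theorem Orthonormal.lt_re_inner_of_mem_span {f : ι → E} (hf : Orthonormal 𝕜 f)
    {T : E →ₗ[𝕜] E} {μ : ι → ℝ} (hT : ∀ i, T (f i) = (μ i : 𝕜) • f i) {t : ℝ}
    (hμ : ∀ i, t < μ i) {x : E} (hx : x ∈ span 𝕜 (Set.range f)) (hx0 : x ≠ 0) :
    t * ‖x‖ ^ 2 < RCLike.re ⟪T x, x⟫_𝕜 := by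
  obtain ⟨c, hnorm, hre⟩ := hf.exists_re_inner_eq_sum hT hx
  have hpos : ∑ i, ‖c i‖ ^ 2 ≠ 0 := by rw [← hnorm]; positivity
  obtain ⟨i, -, hi⟩ := exists_ne_zero_of_sum_ne_zero hpos
  rw [hre, hnorm, mul_sum]
  exact sum_lt_sum (fun j _ => by gcongr; exact (hμ j).le)
    ⟨i, mem_univ i, mul_lt_mul_of_pos_right (hμ i) (lt_of_le_of_ne (by positivity) hi.symm)⟩

/-- Weyl's monotonicity principle in counting form. The `S`-eigenvectors with eigenvalue `> t`
span a space on which `t ‖x‖² < re ⟪T x, x⟫`, so it meets the span of the `T`-eigenvectors with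
eigenvalue `≤ t` trivially; now count dimensions. -/
theorem card_filter_lt_le_of_le {S T : E →ₗ[𝕜] E} (hST : S ≤ T)
    {f : κ → E} (hf : Orthonormal 𝕜 f) {ν : κ → ℝ} (hS : ∀ k, S (f k) = (ν k : 𝕜) • f k)
    (b : OrthonormalBasis ι 𝕜 E) {μ : ι → ℝ} (hT : ∀ i, T (b i) = (μ i : 𝕜) • b i) (t : ℝ) :
    #{k | t < ν k} ≤ #{i | t < μ i} := by
  let W := span 𝕜 (Set.range fun k : {k // t < ν k} => f k)
  let W' := span 𝕜 (Set.range fun i : {i // ¬ t < μ i} => b i)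
  have hf' : Orthonormal 𝕜 fun k : {k // t < ν k} => f k := hf.comp _ Subtype.val_injective
  have hb' : Orthonormal 𝕜 fun i : {i // ¬ t < μ i} => b i :=
    b.orthonormal.comp _ Subtype.val_injective
  have hdisj : Disjoint W W' := by
    rw [Submodule.disjoint_def]
    intro x hxW hxW'
    by_contra hx0
    have h1 := hf'.lt_re_inner_of_mem_span (fun k => hS k) (fun k => k.2) hxW hx0
    have h2 := hb'.re_inner_le_of_mem_span (fun i => hT i) (fun i => not_lt.mp i.2) hxW'
    have h3 := (LinearMap.le_def S T).mp hST |>.re_inner_nonneg_left x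
    rw [LinearMap.sub_apply, inner_sub_left, map_sub] at h3
    linarith
  have := b.toBasis.finiteDimensional_of_finite
  have := Submodule.finrank_add_finrank_le_of_disjoint hdisj
  rw [finrank_span_eq_card hf'.linearIndependent, finrank_span_eq_card hb'.linearIndependent,
    Module.finrank_eq_card_basis b.toBasis, Fintype.card_subtype, Fintype.card_subtype] at this
  have := card_filter_add_card_filter_not (s := univ) (p := fun i => t < μ i)
  rw [card_univ] at this
  omega

end WeylCounting

theorem card_filter_sum_elim {α ι κ : Type*} [Fintype ι] [Fintype κ] (p : α → Prop)
    [DecidablePred p] (f : ι → α) (g : κ → α) :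
    #{k | p (Sum.elim f g k)} = #{i | p (f i)} + #{j | p (g j)} := by
  simp only [card_filter, Fintype.sum_sum_type, Sum.elim_inl, Sum.elim_inr]
  rfl

theorem Antitone.lt_apply_iff_lt_card {n : ℕ} {α : Type*} [LinearOrder α] {g : Fin n → α}
    (hg : Antitone g) (t : α) (j : Fin n) : t < g j ↔ (j : ℕ) < #{k | t < g k} := by
  constructor
  · intro h
    calc (j : ℕ) < #(Iic j) := by simp
      _ ≤ #{k | t < g k} :=
        card_le_card fun k hk => mem_filter.mpr ⟨mem_univ k, h.trans_le (hg (mem_Iic.mp hk))⟩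
  · intro h
    by_contra! hj
    have : #{k | t < g k} ≤ #(Iio j) := card_le_card fun k hk => by
      rw [mem_Iio]
      by_contra! hjk
      exact (mem_filter.mp hk).2.not_ge ((hg hjk).trans hj)
    rw [Fin.card_Iio] at this
    omega

theorem card_lt_abs_le {α ι : Type*} [AddGroup α] [LinearOrder α] [Fintype ι] (μ : ι → α) (t : α) :
    #{i | t < |μ i|} ≤ #{i | t < μ i} + #{i | t < -μ i} := by
  classical
  calc #{i | t < |μ i|} = #(({i | t < μ i} : Finset ι) ∪ ({i | t < -μ i} : Finset ι)) := by
        rw [← filter_or]; simp only [lt_abs]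
    _ ≤ _ := card_union_le _ _

theorem lt_apply_sort_neg_iff {n : ℕ} {α : Type*} [AddCommGroup α] [LinearOrder α]
    [IsOrderedAddMonoid α] (f : Fin n → α) (t : α) (j : Fin n) :
    t < f (Tuple.sort (fun i => -f i) j) ↔ (j : ℕ) < #{i | t < f i} := by
  set σ := Tuple.sort (fun i => -f i)
  have hanti : Antitone (f ∘ σ) := fun a b hab => by
    simpa using Tuple.monotone_sort (fun i => -f i) hab
  refine (hanti.lt_apply_iff_lt_card t j).trans ?_
  rw [card_equiv σ (t := {i | t < f i}) fun k => by simp]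

namespace Matrix
variable {𝕜 : Type*} [RCLike 𝕜] {n : Type*} [Fintype n]

theorem IsHermitian.conjTranspose_mul_self_mulVec {M : Matrix n n 𝕜} (hM : M.IsHermitian)
    {x : n → 𝕜} {μ : ℝ} (h : M *ᵥ x = (μ : 𝕜) • x) :
    (Mᴴ * M) *ᵥ x = ((μ ^ 2 : ℝ) : 𝕜) • x := by
  rw [hM.eq, ← mulVec_mulVec, h, mulVec_smul, h, smul_smul]
  push_cast; ring_nf

variable [DecidableEq n]

theorem toEuclideanLin_le_toEuclideanLin {A B : Matrix n n 𝕜} (h : (B - A).PosSemidef) :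
    toEuclideanLin A ≤ toEuclideanLin B := by
  rwa [LinearMap.le_def, ← map_sub, isPositive_toEuclideanLin_iff]

theorem toEuclideanLin_eq_smul {M : Matrix n n 𝕜} {x : EuclideanSpace 𝕜 n} {c : 𝕜}
    (h : M *ᵥ ofLp x = c • ofLp x) : toEuclideanLin M x = c • x := by
  rw [toLpLin_apply, h]; rfl

theorem IsHermitian.mulVec_eigenvectorBasis' {A : Matrix n n 𝕜} (hA : A.IsHermitian) (i : n) :
    A *ᵥ ofLp (hA.eigenvectorBasis i) = (hA.eigenvalues i : 𝕜) • ofLp (hA.eigenvectorBasis i) := by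
  rw [hA.mulVec_eigenvectorBasis, RCLike.real_smul_eq_coe_smul (K := 𝕜)]

variable {κ : Type*} [Fintype κ]

theorem IsHermitian.card_lt_eigenvalues_le {A B : Matrix n n 𝕜} (hA : A.IsHermitian)
    (hB : B.IsHermitian) (h : (B - A).PosSemidef) (t : ℝ) :
    #{i | t < hA.eigenvalues i} ≤ #{i | t < hB.eigenvalues i} :=
  card_filter_lt_le_of_le (toEuclideanLin_le_toEuclideanLin h)
    hA.eigenvectorBasis.orthonormal
    (fun i => toEuclideanLin_eq_smul (hA.mulVec_eigenvectorBasis' i))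
    hB.eigenvectorBasis (fun i => toEuclideanLin_eq_smul (hB.mulVec_eigenvectorBasis' i)) t

theorem IsHermitian.card_lt_neg_eigenvalues_le {A B : Matrix n n 𝕜} (hA : A.IsHermitian)
    (hB : B.IsHermitian) (h : (B + A).PosSemidef) (t : ℝ) :
    #{i | t < -hA.eigenvalues i} ≤ #{i | t < hB.eigenvalues i} :=
  card_filter_lt_le_of_le (toEuclideanLin_le_toEuclideanLin (by rwa [sub_neg_eq_add]))
    hA.eigenvectorBasis.orthonormal
    (fun i => toEuclideanLin_eq_smul (by
      rw [neg_mulVec, hA.mulVec_eigenvectorBasis', RCLike.ofReal_neg, neg_smul]))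
    hB.eigenvectorBasis (fun i => toEuclideanLin_eq_smul (hB.mulVec_eigenvectorBasis' i)) t

theorem IsHermitian.card_lt_abs_le_of_orthonormal {M : Matrix n n 𝕜} (hM : M.IsHermitian)
    {f : κ → EuclideanSpace 𝕜 n} (hf : Orthonormal 𝕜 f) {ν : κ → ℝ}
    (hν : ∀ k, M *ᵥ ofLp (f k) = (ν k : 𝕜) • ofLp (f k)) {t : ℝ} (ht : 0 ≤ t) :
    #{k | t < |ν k|} ≤
      #{i | t ^ 2 < (posSemidef_conjTranspose_mul_self M).isHermitian.eigenvalues i} := by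
  have hM' := (posSemidef_conjTranspose_mul_self M).isHermitian
  have := card_filter_lt_le_of_le le_rfl hf
    (fun k => toEuclideanLin_eq_smul (hM.conjTranspose_mul_self_mulVec (hν k)))
    hM'.eigenvectorBasis (fun i => toEuclideanLin_eq_smul (hM'.mulVec_eigenvectorBasis' i)) (t ^ 2)
  simpa only [sq_lt_sq, abs_of_nonneg ht] using this

theorem IsHermitian.card_sq_lt_eigenvalues_conjTranspose_mul_self_le {M : Matrix n n 𝕜}
    (hM : M.IsHermitian) {t : ℝ} (ht : 0 ≤ t) :
    #{i | t ^ 2 < (posSemidef_conjTranspose_mul_self M).isHermitian.eigenvalues i} ≤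
      #{i | t < |hM.eigenvalues i|} := by
  have hM' := (posSemidef_conjTranspose_mul_self M).isHermitian
  have := card_filter_lt_le_of_le le_rfl hM'.eigenvectorBasis.orthonormal
    (fun i => toEuclideanLin_eq_smul (hM'.mulVec_eigenvectorBasis' i))
    hM.eigenvectorBasis
    (fun i => toEuclideanLin_eq_smul
      (hM.conjTranspose_mul_self_mulVec (hM.mulVec_eigenvectorBasis' i)))
    (t ^ 2)
  simpa only [sq_lt_sq, abs_of_nonneg ht] using this

end Matrix

theorem Fin.append_smul {m n : ℕ} {M α : Type*} [SMul M α] (c : M) (u : Fin m → α)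
    (w : Fin n → α) : Fin.append (c • u) (c • w) = c • Fin.append u w := by
  ext i
  cases i using Fin.addCases <;> simp

theorem EuclideanSpace.inner_toLp_append {𝕜 : Type*} [RCLike 𝕜] {m n : ℕ} (a c : Fin m → 𝕜)
    (b d : Fin n → 𝕜) :
    ⟪toLp 2 (Fin.append a b), toLp 2 (Fin.append c d)⟫_𝕜 =
      ⟪toLp 2 a, toLp 2 c⟫_𝕜 + ⟪toLp 2 b, toLp 2 d⟫_𝕜 := by
  simp [PiLp.inner_apply, Fin.sum_univ_add]

theorem Orthonormal.sum_elim_append {𝕜 : Type*} [RCLike 𝕜] {m n : ℕ} {ι κ : Type*}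
    {f : ι → EuclideanSpace 𝕜 (Fin m)} {g : κ → EuclideanSpace 𝕜 (Fin n)}
    (hf : Orthonormal 𝕜 f) (hg : Orthonormal 𝕜 g) :
    Orthonormal 𝕜 (Sum.elim (fun i => toLp 2 (Fin.append (ofLp (f i)) 0))
      (fun k => toLp 2 (Fin.append 0 (ofLp (g k))))) := by
  classical
  rw [orthonormal_iff_ite] at hf hg ⊢
  rintro (i | i) (j | j) <;> simp [EuclideanSpace.inner_toLp_append, hf, hg]

theorem dirSum_mulVec_append {n : ℕ} (M N : Matrix (Fin n) (Fin n) ℂ) (u w : Fin n → ℂ) :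
    dirSum M N *ᵥ Fin.append u w = Fin.append (M *ᵥ u) (N *ᵥ w) := by
  rw [dirSum, reindex_apply, submatrix_mulVec_equiv, Equiv.symm_symm]
  ext i
  cases i using Fin.addCases <;> simp [fromBlocks_mulVec, Function.comp_def, -Fin.natAdd_eq_addNat]

theorem isHermitian_dirSum {n : ℕ} {M N : Matrix (Fin n) (Fin n) ℂ} (hM : M.IsHermitian)
    (hN : N.IsHermitian) : (dirSum M N).IsHermitian :=
  (hM.fromBlocks (by simp) hN).submatrix _

theorem two_mul_card_lt_eigenvalues_le_dirSum {n : ℕ}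
    {B : Matrix (Fin n) (Fin n) ℂ} (hB : B.IsHermitian) {t : ℝ} (ht : 0 ≤ t) :
    2 * #{i | t < hB.eigenvalues i} ≤
      #{i | t ^ 2 < (posSemidef_conjTranspose_mul_self (dirSum B B)).isHermitian.eigenvalues i} :=
  calc 2 * #{i | t < hB.eigenvalues i}
      ≤ #{i | t < |hB.eigenvalues i|} + #{i | t < |hB.eigenvalues i|} := by
        rw [two_mul]
        gcongr <;> exact le_abs_self _
    _ = #{k | t < |Sum.elim hB.eigenvalues hB.eigenvalues k|} :=
        (card_filter_sum_elim (fun x => t < |x|) _ _).symm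
    _ ≤ _ := (isHermitian_dirSum hB hB).card_lt_abs_le_of_orthonormal
        (hB.eigenvectorBasis.orthonormal.sum_elim_append hB.eigenvectorBasis.orthonormal)
        (by
          rintro (i | i) <;> simp only [Sum.elim_inl, Sum.elim_inr, ofLp_toLp,
            dirSum_mulVec_append, mulVec_zero, hB.mulVec_eigenvectorBasis', ← Fin.append_smul,
            smul_zero]) ht

theorem lt_sval_iff {n : ℕ} (A : Matrix (Fin n) (Fin n) ℂ) {t : ℝ} (ht : 0 ≤ t) (j : Fin n) :
    t < sval A j ↔
      (j : ℕ) < #{i | t ^ 2 < (posSemidef_conjTranspose_mul_self A).isHermitian.eigenvalues i} := by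
  refine (lt_apply_sort_neg_iff
    (fun i => √((posSemidef_conjTranspose_mul_self A).isHermitian.eigenvalues i)) t j).trans ?_
  simp_rw [Real.lt_sqrt ht]

theorem card_sq_lt_eigenvalues_le_dirSum {n : ℕ} {A B : Matrix (Fin n) (Fin n) ℂ}
    (hA : A.IsHermitian) (hB : B.IsHermitian) (h1 : (B - A).PosSemidef)
    (h2 : (B + A).PosSemidef) {t : ℝ} (ht : 0 ≤ t) :
    #{i | t ^ 2 < (posSemidef_conjTranspose_mul_self A).isHermitian.eigenvalues i} ≤
      #{i | t ^ 2 < (posSemidef_conjTranspose_mul_self (dirSum B B)).isHermitian.eigenvalues i} :=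
  calc _ ≤ #{i | t < |hA.eigenvalues i|} := hA.card_sq_lt_eigenvalues_conjTranspose_mul_self_le ht
    _ ≤ #{i | t < hA.eigenvalues i} + #{i | t < -hA.eigenvalues i} := card_lt_abs_le _ t
    _ ≤ 2 * #{i | t < hB.eigenvalues i} := by
        rw [two_mul]
        exact add_le_add (hA.card_lt_eigenvalues_le hB h1 t) (hA.card_lt_neg_eigenvalues_le hB h2 t)
    _ ≤ _ := two_mul_card_lt_eigenvalues_le_dirSum hB ht

theorem sval_le_sval_dirSum {v : ℕ} {A B : Matrix (Fin v) (Fin v) ℂ}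
    (hA : A.IsHermitian) (hB : B.IsHermitian)
    (h1 : (B - A).PosSemidef) (h2 : (B + A).PosSemidef) :
    ∀ j : Fin v, sval A j ≤ sval (dirSum B B) (Fin.castAdd v j) := by
  intro j
  set t := sval (dirSum B B) (Fin.castAdd v j)
  have ht : 0 ≤ t := Real.sqrt_nonneg _
  by_contra! h
  have hlt := (lt_sval_iff A ht j).mp h
  have hle := (lt_sval_iff (dirSum B B) ht (Fin.castAdd v j)).not.mp (lt_irrefl t)
  have hcount := card_sq_lt_eigenvalues_le_dirSum hA hB h1 h2 ht
  simp only [Fin.val_castAdd, not_lt] at hle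
  omega
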